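/- Let G be a group of order p^5, p prime, with rk(G) < rk(Z(G)). Then rk(G) = 2, |Z(G)| = p^3, and rk(Z(G)) = 3. -/
import Mathlib

open Subgroup

/-- The rank of a group: the minimum cardinality of a generating set. -/
noncomputable def rk (G : Type*) [Group G] : ℕ :=
  sInf {n | ∃ S : Finset G, S.card = n ∧ Subgroup.closure (S : Set G) = ⊤}

lemma rk_le {G : Type*} [Group G] (S : Finset G) (h : Subgroup.closure (S : Set G) = ⊤) :
    rk G ≤ S.card := Nat.sInf_le ⟨S, rfl, h⟩

lemma exists_rk_gen (G : Type*) [Group G] [Finite G] :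
    ∃ S : Finset G, S.card = rk G ∧ Subgroup.closure (S : Set G) = ⊤ := by
  have : Nonempty (Fintype G) := ⟨Fintype.ofFinite G⟩
  obtain ⟨inst⟩ := this
  have hne : {n | ∃ S : Finset G, S.card = n ∧ Subgroup.closure (S : Set G) = ⊤}.Nonempty := by
    refine ⟨(Finset.univ : Finset G).card, Finset.univ, rfl, ?_⟩
    rw [Finset.coe_univ]
    exact Subgroup.closure_univ
  exact Nat.sInf_mem hne

lemma rk_le_of_mulEquiv {G H : Type*} [Group G] [Group H] [Finite G] (e : G ≃* H) :
    rk H ≤ rk G := by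
  classical
  obtain ⟨S, hS, hgen⟩ := exists_rk_gen G
  have : Subgroup.closure ((S.image e : Finset H) : Set H) = ⊤ := by
    rw [Finset.coe_image, show ⇑e = ⇑e.toMonoidHom from rfl, ← MonoidHom.map_closure e.toMonoidHom, hgen]
    exact Subgroup.map_top_of_surjective _ e.surjective
  calc rk H ≤ (S.image e).card := rk_le _ this
    _ ≤ S.card := Finset.card_image_le
    _ = rk G := hS

lemma rk_eq_of_mulEquiv {G H : Type*} [Group G] [Group H] [Finite G] (e : G ≃* H) :
    rk G = rk H := by
  have : Finite H := Finite.of_equiv G e.toEquiv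
  exact le_antisymm (rk_le_of_mulEquiv e.symm) (rk_le_of_mulEquiv e)

lemma rk_le_one_of_isCyclic {G : Type*} [Group G] [IsCyclic G] : rk G ≤ 1 := by
  obtain ⟨g, hg⟩ := IsCyclic.exists_generator (α := G)
  have : Subgroup.closure (({g} : Finset G) : Set G) = ⊤ := by
    rw [Finset.coe_singleton, ← Subgroup.zpowers_eq_closure]
    exact (Subgroup.eq_top_iff' _).2 hg
  simpa using rk_le {g} this

lemma key_step {G : Type*} [Group G] [Finite G] {p : ℕ} (hp : p.Prime)
    (hpg : ∀ K : Subgroup G, ∃ i, Nat.card K = p ^ i) :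
    ∀ (n : ℕ) (K : Subgroup G), Nat.card G - Nat.card K ≤ n →
      ∃ S : Finset G, K ⊔ Subgroup.closure (S : Set G) = ⊤ ∧
        Nat.card K * p ^ S.card ∣ Nat.card G := by
  intro n
  induction n with
  | zero =>
    intro K hK
    have hcardle : Nat.card K ≤ Nat.card G := Nat.card_le_card_of_injective _ Subtype.val_injective
    have : Nat.card G ≤ Nat.card K := by omega
    have hKtop : K = ⊤ := Subgroup.eq_top_of_card_eq K (le_antisymm hcardle this)
    exact ⟨∅, by simp [hKtop], by rw [hKtop, Subgroup.card_top]; simp⟩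
  | succ n ih =>
    intro K hK
    by_cases htop : K = ⊤
    · exact ⟨∅, by simp [htop], by rw [htop, Subgroup.card_top]; simp⟩
    · obtain ⟨x, hx⟩ : ∃ x : G, x ∉ K := by
        by_contra h
        push_neg at h
        exact htop ((Subgroup.eq_top_iff' K).2 h)
      set K' := K ⊔ Subgroup.closure {x} with hK'
      have hle : K ≤ K' := le_sup_left
      have hne : K ≠ K' := by
        intro h
        apply hx
        rw [h]
        exact SetLike.le_def.mp le_sup_right (Subgroup.subset_closure (Set.mem_singleton x))
      have hcardlt : Nat.card K < Nat.card K' := by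
        rcases lt_or_ge (Nat.card K) (Nat.card K') with h | h
        · exact h
        · exact absurd (Subgroup.eq_of_le_of_card_ge hle h) hne
      have hdvd : Nat.card K ∣ Nat.card K' := Subgroup.card_dvd_of_le hle
      obtain ⟨a, ha⟩ := hpg K
      obtain ⟨b, hb⟩ := hpg K'
      have hab : a < b := by
        rw [ha, hb] at hcardlt
        exact (Nat.pow_lt_pow_iff_right hp.one_lt).1 hcardlt
      have hmul : Nat.card K * p ∣ Nat.card K' := by
        rw [ha, hb, ← pow_succ]
        exact pow_dvd_pow p (by omega)
      have hK'le : Nat.card K' ≤ Nat.card G :=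
        Nat.card_le_card_of_injective _ Subtype.val_injective
      have hpos : 0 < Nat.card K := Nat.card_pos
      obtain ⟨S', hS'gen, hS'dvd⟩ := ih K' (by omega)
      classical
      refine ⟨insert x S', ?_, ?_⟩
      · rw [Finset.coe_insert, ← Set.singleton_union, Subgroup.closure_union, ← sup_assoc, ← hK']
        exact hS'gen
      · have hcardins : (insert x S').card ≤ S'.card + 1 := Finset.card_insert_le x S'
        calc Nat.card K * p ^ (insert x S').card
            ∣ Nat.card K * p ^ (S'.card + 1) :=
              mul_dvd_mul_left _ (pow_dvd_pow p hcardins)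
          _ = (Nat.card K * p) * p ^ S'.card := by ring
          _ ∣ Nat.card K' * p ^ S'.card := mul_dvd_mul_right hmul _
          _ ∣ Nat.card G := hS'dvd

lemma rk_le_of_card_pow {G : Type*} [Group G] [Finite G] {p k : ℕ} (hp : p.Prime)
    (h : Nat.card G = p ^ k) : rk G ≤ k := by
  have hpg : ∀ K : Subgroup G, ∃ i, Nat.card K = p ^ i := by
    intro K
    have : Nat.card K ∣ p ^ k := h ▸ Subgroup.card_subgroup_dvd_card K
    obtain ⟨i, _, hi⟩ := (Nat.dvd_prime_pow hp).1 this
    exact ⟨i, hi⟩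
  obtain ⟨S, hSgen, hSdvd⟩ := key_step hp hpg (Nat.card G) ⊥ (by omega)
  rw [bot_sup_eq] at hSgen
  rw [Subgroup.card_bot, one_mul, h] at hSdvd
  have hcard : S.card ≤ k := (Nat.pow_dvd_pow_iff_le_right hp.one_lt).1 hSdvd
  exact le_trans (rk_le S hSgen) hcard

/-- a C-group of order `p^5` has `rk(G) = 2`, `|Z(G)| = p^3`, and
`rk(Z(G)) = 3`. -/
theorem stmt_9 (p : ℕ) (hp : p.Prime) (G : Type*) [Group G]
    (hG : Nat.card G = p ^ 5) (hC : rk G < rk (Subgroup.center G)) :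
    rk G = 2 ∧ Nat.card (Subgroup.center G) = p ^ 3 ∧ rk (Subgroup.center G) = 3 := by
  have hfin : Finite G := Nat.finite_of_card_ne_zero (by
    rw [hG]; exact (pow_pos hp.pos 5).ne')
  have hnt : Nontrivial G := by
    rw [← Finite.one_lt_card_iff_nontrivial, hG]
    exact one_lt_pow₀ hp.one_lt (by norm_num)
  -- commutativity leads to contradiction
  have hnoncomm : ¬ (∀ a b : G, a * b = b * a) := by
    intro hc
    have hZtop : Subgroup.center G = ⊤ := by
      rw [eq_top_iff]
      intro x _
      exact Subgroup.mem_center_iff.2 fun y => hc y x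
    rw [hZtop] at hC
    have := rk_eq_of_mulEquiv (Subgroup.topEquiv (G := G))
    omega
  -- rk G ≥ 2
  have hrk2 : 2 ≤ rk G := by
    by_contra h
    push_neg at h
    obtain ⟨S, hScard, hSgen⟩ := exists_rk_gen G
    interval_cases hrk : rk G
    · rw [Finset.card_eq_zero] at hScard
      subst hScard
      simp only [Finset.coe_empty, Subgroup.closure_empty] at hSgen
      exact bot_ne_top (α := Subgroup G) hSgen
    · rw [Finset.card_eq_one] at hScard
      obtain ⟨g, rfl⟩ := hScard
      have hcyc : IsCyclic G := by
        refine ⟨⟨g, fun x => ?_⟩⟩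
        have hx : x ∈ Subgroup.zpowers g := by
          rw [Subgroup.zpowers_eq_closure, ← Finset.coe_singleton, hSgen]
          trivial
        exact hx
      letI := hcyc.commGroup
      exact hnoncomm fun a b => mul_comm a b
  have hrkZ3 : 3 ≤ rk (Subgroup.center G) := by omega
  -- |Z| = p^m
  have hdvd : Nat.card (Subgroup.center G) ∣ p ^ 5 :=
    hG ▸ Subgroup.card_subgroup_dvd_card _
  obtain ⟨m, hm5, hmcard⟩ := (Nat.dvd_prime_pow hp).1 hdvd
  have hrkZm : rk (Subgroup.center G) ≤ m := rk_le_of_card_pow hp hmcard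
  have hm3 : 3 ≤ m := le_trans hrkZ3 hrkZm
  -- m ≤ 3
  have hm_eq : m = 3 := by
    by_contra hne
    have hm4 : 4 ≤ m := by omega
    -- quotient has card p^(5-m) ∈ {1, p}
    have hcardeq := Subgroup.card_eq_card_quotient_mul_card_subgroup (Subgroup.center G)
    rw [hG, hmcard] at hcardeq
    have hQ : Nat.card (G ⧸ Subgroup.center G) = p ^ (5 - m) := by
      have hpm : 0 < p ^ m := pow_pos hp.pos m
      have : p ^ 5 = p ^ (5 - m) * p ^ m := by
        rw [← pow_add]
        congr 1
        omega
      rw [this] at hcardeq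
      exact (Nat.eq_of_mul_eq_mul_right hpm hcardeq.symm)
    have hcycQ : IsCyclic (G ⧸ Subgroup.center G) := by
      interval_cases m
      · -- m = 4 : card Q = p
        have hQp : Nat.card (G ⧸ Subgroup.center G) = p := by rw [hQ]; ring
        haveI : Fact p.Prime := ⟨hp⟩
        exact isCyclic_of_prime_card hQp
      · -- m = 5 : card Q = 1
        have hQ1 : Nat.card (G ⧸ Subgroup.center G) = 1 := by rw [hQ]; ring
        haveI : Subsingleton (G ⧸ Subgroup.center G) :=
          (Nat.card_eq_one_iff_unique.1 hQ1).1
        infer_instance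
    haveI := hcycQ
    exact hnoncomm (commutative_of_cyclic_center_quotient
      (QuotientGroup.mk' (Subgroup.center G)) (by rw [QuotientGroup.ker_mk']))
  subst hm_eq
  exact ⟨by omega, hmcard, by omega⟩
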